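/- arXiv:1602.01029 — 6 statements merged into one kernel-verified Lean document; each statement's English description precedes it below -/
import Mathlib

section
/- For a simple connected graph G, let K(G) = sup over real r > 0 and vertices x of |B(x,2r)|/|B(x,r)| (balls of real radius, i.e. B(x,r) = B(x,⌊r⌋)). Then max{D_2(G), 1 + Δ_G} ≤ K(G) ≤ D_2(G)·(1 + Δ_G), where Δ_G is the maximum degree and D_2(G) is the 2-dilation index taken over natural number radii. -/
open scoped ENNReal

noncomputable def ballCard {V : Type*} (G : SimpleGraph V) (x : V) (r : ℕ) : ℕ :=
  {y | G.dist x y ≤ r}.ncard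

noncomputable def dil {V : Type*} (G : SimpleGraph V) (k : ℕ) : ℝ≥0∞ :=
  ⨆ (x : V) (r : ℕ), (ballCard G x (k * r) : ℝ≥0∞) / (ballCard G x r : ℝ≥0∞)

/-- The maximum degree `Δ_G` of the graph, as an extended nonnegative real. -/
noncomputable def maxDeg {V : Type*} (G : SimpleGraph V) : ℝ≥0∞ :=
  ⨆ x : V, ((G.neighborSet x).ncard : ℝ≥0∞)

/-- `K(G)`: sup over real radii `r > 0` of `|B(x,2r)|/|B(x,r)|`, where the ball of
real radius `r` is the ball of natural radius `⌊r⌋`. -/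
noncomputable def KG {V : Type*} (G : SimpleGraph V) : ℝ≥0∞ :=
  ⨆ (x : V) (r : {r : ℝ // 0 < r}),
    (ballCard G x ⌊2 * r.1⌋₊ : ℝ≥0∞) / (ballCard G x ⌊r.1⌋₊ : ℝ≥0∞)

lemma step_lemma {V : Type*} {G : SimpleGraph V} {x z : V} {n : ℕ}
    (h : G.dist x z = n + 1) : ∃ y, G.Adj y z ∧ G.dist x y ≤ n := by
  obtain ⟨p, hp⟩ := SimpleGraph.exists_walk_of_dist_ne_zero (by omega : G.dist x z ≠ 0)
  have hlen : p.reverse.length = n + 1 := by rw [SimpleGraph.Walk.length_reverse, hp, h]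
  cases hq : p.reverse with
  | nil => rw [hq] at hlen; simp at hlen
  | cons hadj q =>
    rename_i y
    refine ⟨y, hadj.symm, ?_⟩
    have := SimpleGraph.dist_le q.reverse
    rw [hq] at hlen
    simp only [SimpleGraph.Walk.length_cons] at hlen
    rw [SimpleGraph.Walk.length_reverse] at this
    omega

lemma ball_zero {V : Type*} {G : SimpleGraph V} (hconn : G.Connected) (x : V) :
    {y | G.dist x y ≤ 0} = {x} := by
  ext y
  simp [Nat.le_zero, hconn.dist_eq_zero_iff, eq_comm]

lemma ball_finite {V : Type*} {G : SimpleGraph V} (hconn : G.Connected)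
    (hloc : ∀ x : V, (G.neighborSet x).Finite) (x : V) :
    ∀ n : ℕ, {y | G.dist x y ≤ n}.Finite := by
  intro n
  induction n with
  | zero => rw [ball_zero hconn]; exact Set.finite_singleton x
  | succ n ih =>
    have hsub : {y | G.dist x y ≤ n + 1} ⊆
        {y | G.dist x y ≤ n} ∪ ⋃ y ∈ {y | G.dist x y ≤ n}, G.neighborSet y := by
      intro z hz
      rcases le_or_gt (G.dist x z) n with h | h
      · exact Or.inl h
      · have hz' : G.dist x z = n + 1 := le_antisymm hz h
        obtain ⟨y, hadj, hy⟩ := step_lemma hz'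
        exact Or.inr (Set.mem_biUnion hy hadj)
    exact (ih.union (ih.biUnion (fun y _ => hloc y))).subset hsub

lemma ballCard_zero {V : Type*} {G : SimpleGraph V} (hconn : G.Connected) (x : V) :
    ballCard G x 0 = 1 := by
  rw [ballCard, ball_zero hconn]; simp

lemma ballCard_pos {V : Type*} {G : SimpleGraph V} (hconn : G.Connected)
    (hloc : ∀ x : V, (G.neighborSet x).Finite) (x : V) (n : ℕ) :
    1 ≤ ballCard G x n := by
  rw [ballCard]
  have : x ∈ {y | G.dist x y ≤ n} := by simp [SimpleGraph.dist_self]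
  rw [Nat.one_le_iff_ne_zero, Ne, Set.ncard_eq_zero (ball_finite hconn hloc x n)]
  intro h; rw [h] at this; exact this

lemma ballCard_mono {V : Type*} {G : SimpleGraph V} (hconn : G.Connected)
    (hloc : ∀ x : V, (G.neighborSet x).Finite) (x : V) {m n : ℕ} (h : m ≤ n) :
    ballCard G x m ≤ ballCard G x n :=
  Set.ncard_le_ncard (fun y hy => le_trans hy h) (ball_finite hconn hloc x n)

lemma ballCard_one {V : Type*} {G : SimpleGraph V} (hconn : G.Connected)
    (hloc : ∀ x : V, (G.neighborSet x).Finite) (x : V) :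
    ballCard G x 1 = 1 + (G.neighborSet x).ncard := by
  have : {y | G.dist x y ≤ 1} = insert x (G.neighborSet x) := by
    ext y
    simp only [Set.mem_setOf_eq, Set.mem_insert_iff, SimpleGraph.mem_neighborSet]
    constructor
    · intro h
      interval_cases h' : G.dist x y
      · exact Or.inl ((hconn.dist_eq_zero_iff.mp h').symm)
      · exact Or.inr (SimpleGraph.dist_eq_one_iff_adj.mp h')
    · rintro (rfl | h)
      · simp [SimpleGraph.dist_self]
      · rw [SimpleGraph.dist_eq_one_iff_adj.mpr h]
    done
  have hnm : x ∉ G.neighborSet x := by simp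
  rw [ballCard, this, Set.ncard_insert_of_notMem hnm (hloc x)]
  omega

lemma growth {V : Type*} {G : SimpleGraph V} (hconn : G.Connected)
    (hloc : ∀ x : V, (G.neighborSet x).Finite) (x : V) (n : ℕ) :
    (ballCard G x (n + 1) : ℝ≥0∞) ≤ (1 + maxDeg G) * ballCard G x n := by
  classical
  set S := (ball_finite hconn hloc x n).toFinset with hS
  set F : V → Finset V := fun y => insert y (hloc y).toFinset with hF
  have hsub : (ball_finite hconn hloc x (n + 1)).toFinset ⊆ S.biUnion F := by
    intro z hz
    rw [Set.Finite.mem_toFinset] at hz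
    rcases le_or_gt (G.dist x z) n with h | h
    · refine Finset.mem_biUnion.mpr ⟨z, ?_, ?_⟩
      · rw [hS, Set.Finite.mem_toFinset]; exact h
      · simp [hF]
    · have hz' : G.dist x z = n + 1 := le_antisymm hz h
      obtain ⟨y, hadj, hy⟩ := step_lemma hz'
      refine Finset.mem_biUnion.mpr ⟨y, ?_, ?_⟩
      · rw [hS, Set.Finite.mem_toFinset]; exact hy
      · simp only [hF, Finset.mem_insert, Set.Finite.mem_toFinset]
        exact Or.inr hadj
  have h1 : ballCard G x (n + 1) ≤ ∑ y ∈ S, (F y).card := by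
    calc ballCard G x (n + 1) = (ball_finite hconn hloc x (n + 1)).toFinset.card :=
          (Set.ncard_eq_toFinset_card _ _)
      _ ≤ (S.biUnion F).card := Finset.card_le_card hsub
      _ ≤ ∑ y ∈ S, (F y).card := Finset.card_biUnion_le
  -- now cast to ENNReal
  have h2 : ∀ y ∈ S, ((F y).card : ℝ≥0∞) ≤ 1 + maxDeg G := by
    intro y _
    have hc : (F y).card ≤ 1 + (G.neighborSet y).ncard := by
      rw [hF]
      calc (insert y (hloc y).toFinset).card ≤ (hloc y).toFinset.card + 1 :=
            Finset.card_insert_le _ _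
        _ = 1 + (G.neighborSet y).ncard := by
            rw [Set.ncard_eq_toFinset_card _ (hloc y)]; omega
    calc ((F y).card : ℝ≥0∞) ≤ ((1 + (G.neighborSet y).ncard : ℕ) : ℝ≥0∞) := by
          exact_mod_cast hc
      _ = 1 + ((G.neighborSet y).ncard : ℝ≥0∞) := by push_cast; ring
      _ ≤ 1 + maxDeg G := by
          gcongr
          exact le_iSup (fun y => ((G.neighborSet y).ncard : ℝ≥0∞)) y
  calc (ballCard G x (n + 1) : ℝ≥0∞) ≤ ∑ y ∈ S, ((F y).card : ℝ≥0∞) := by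
        calc (ballCard G x (n + 1) : ℝ≥0∞)
            ≤ ((∑ y ∈ S, (F y).card : ℕ) : ℝ≥0∞) := by
              exact_mod_cast h1
          _ = ∑ y ∈ S, ((F y).card : ℝ≥0∞) := by push_cast; rfl
    _ ≤ ∑ _y ∈ S, (1 + maxDeg G) := Finset.sum_le_sum h2
    _ = S.card * (1 + maxDeg G) := by rw [Finset.sum_const, nsmul_eq_mul]
    _ = (1 + maxDeg G) * ballCard G x n := by
        rw [mul_comm, ballCard, Set.ncard_eq_toFinset_card _ (ball_finite hconn hloc x n)]

theorem stmt1 {V : Type*} (G : SimpleGraph V) (hconn : G.Connected)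
    (hloc : ∀ x : V, (G.neighborSet x).Finite) (hV : Infinite V) :
    max (dil G 2) (1 + maxDeg G) ≤ KG G ∧ KG G ≤ dil G 2 * (1 + maxDeg G) := by
  have hb0 : ∀ (x : V) (n : ℕ), (ballCard G x n : ℝ≥0∞) ≠ 0 := by
    intro x n
    simpa using Nat.one_le_iff_ne_zero.mp (ballCard_pos hconn hloc x n)
  have hbt : ∀ (x : V) (n : ℕ), (ballCard G x n : ℝ≥0∞) ≠ ∞ := fun x n => ENNReal.natCast_ne_top _
  have hhalf : (0:ℝ) < 1/2 := by norm_num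
  have hfloor1 : ⌊2 * ((1:ℝ)/2)⌋₊ = 1 := by norm_num
  have hfloor0 : ⌊(1:ℝ)/2⌋₊ = 0 := by
    rw [Nat.floor_eq_zero]; norm_num
  -- KG ≥ 1 + deg x for each x
  have hdegKG : ∀ x : V, 1 + ((G.neighborSet x).ncard : ℝ≥0∞) ≤ KG G := by
    intro x
    have : 1 + ((G.neighborSet x).ncard : ℝ≥0∞) =
        (ballCard G x ⌊2 * ((1:ℝ)/2)⌋₊ : ℝ≥0∞) / (ballCard G x ⌊(1:ℝ)/2⌋₊ : ℝ≥0∞) := by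
      rw [hfloor1, hfloor0, ballCard_zero hconn, ballCard_one hconn hloc]
      push_cast
      simp
    rw [this]
    exact le_iSup_of_le x (le_iSup_of_le ⟨1/2, hhalf⟩ le_rfl)
  have hone : (1 : ℝ≥0∞) ≤ KG G := by
    obtain ⟨x⟩ := hV.nonempty
    exact le_trans (le_add_right le_rfl) (hdegKG x)
  refine ⟨max_le ?_ ?_, ?_⟩
  · -- dil ≤ KG
    rw [dil]
    refine iSup_le fun x => iSup_le fun r => ?_
    match r with
    | 0 =>
      simp only [Nat.mul_zero]
      rw [ENNReal.div_self (hb0 x 0) (hbt x 0)]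
      exact hone
    | (m+1) =>
      have hrpos : (0:ℝ) < ((m+1 : ℕ) : ℝ) := by positivity
      have h1 : ⌊2 * ((m+1 : ℕ) : ℝ)⌋₊ = 2 * (m+1) := by
        rw [show (2 : ℝ) * ((m+1 : ℕ) : ℝ) = ((2 * (m+1) : ℕ) : ℝ) by push_cast; ring,
          Nat.floor_natCast]
      have h2 : ⌊((m+1 : ℕ) : ℝ)⌋₊ = m + 1 := Nat.floor_natCast _
      calc (ballCard G x (2 * (m+1)) : ℝ≥0∞) / (ballCard G x (m+1) : ℝ≥0∞)
          = (ballCard G x ⌊2 * ((m+1 : ℕ) : ℝ)⌋₊ : ℝ≥0∞) /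
            (ballCard G x ⌊((m+1 : ℕ) : ℝ)⌋₊ : ℝ≥0∞) := by rw [h1, h2]
        _ ≤ KG G := le_iSup_of_le x (le_iSup_of_le ⟨((m+1 : ℕ) : ℝ), hrpos⟩ le_rfl)
  · -- 1 + maxDeg ≤ KG
    have : Nonempty V := hV.nonempty
    rw [maxDeg, ENNReal.add_iSup]
    exact iSup_le hdegKG
  · -- KG ≤ dil * (1 + maxDeg)
    rw [KG]
    refine iSup_le fun x => iSup_le fun r => ?_
    obtain ⟨r, hr⟩ := r
    set n := ⌊r⌋₊ with hn
    have h2r : ⌊2 * r⌋₊ ≤ 2 * n + 1 := by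
      have : 2 * r < ((2 * n + 2 : ℕ) : ℝ) := by
        push_cast
        have := Nat.lt_floor_add_one r
        rw [← hn] at this
        linarith
      have := (Nat.floor_lt (by positivity)).mpr this
      omega
    have key : (ballCard G x ⌊2 * r⌋₊ : ℝ≥0∞) ≤ dil G 2 * (1 + maxDeg G) * ballCard G x n := by
      calc (ballCard G x ⌊2 * r⌋₊ : ℝ≥0∞) ≤ (ballCard G x (2 * n + 1) : ℝ≥0∞) := by
            exact_mod_cast ballCard_mono hconn hloc x h2r
        _ ≤ (1 + maxDeg G) * ballCard G x (2 * n) := growth hconn hloc x (2 * n)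
        _ ≤ (1 + maxDeg G) * (dil G 2 * ballCard G x n) := by
            gcongr
            have hd : (ballCard G x (2 * n) : ℝ≥0∞) / (ballCard G x n : ℝ≥0∞) ≤ dil G 2 :=
              le_iSup_of_le x (le_iSup_of_le n le_rfl)
            exact (ENNReal.div_le_iff (hb0 x n) (hbt x n)).mp hd
        _ = dil G 2 * (1 + maxDeg G) * ballCard G x n := by ring
    exact (ENNReal.div_le_iff (hb0 x n) (hbt x n)).mpr key
end

section
/- If a graph G has the equidistant comparability property with constant C(G) and finite maximum degree Δ_G, then G satisfies the local doubling condition: for every r ∈ ℕ with r ≥ 1 and every vertex x, |B(x,2r)| ≤ (1 + Δ_G^r · C(G)) · |B(x,r)|. -/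
/-
Every vertex at distance at most `2r` from `x` lies either in `B(x,r)` or within distance `r` of
a point `y` of the sphere `S(x,r)` (cut a geodesic from `x` at length `r`). The sphere has at most
`Δ^r` points, since each point of `S(x,n+1)` is a neighbour of a point of `S(x,n)`, and the
equidistant comparability property bounds each `|B(y,r)|` by `C(G)·|B(x,r)|` because `d(x,y) = r`.
-/

open scoped ENNReal

noncomputable def ecpConst {V : Type*} (G : SimpleGraph V) : ℝ≥0∞ :=
  ⨆ (x : V) (y : V),
    (ballCard G x (G.dist x y) : ℝ≥0∞) / (ballCard G y (G.dist x y) : ℝ≥0∞)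

lemma Set.ncard_biUnion_le_ncard_mul {ι α : Type*} {t : Set ι} (ht : t.Finite)
    (s : ι → Set α) {c : ℝ≥0∞} (hs : ∀ i ∈ t, ((s i).ncard : ℝ≥0∞) ≤ c) :
    ((⋃ i ∈ t, s i).ncard : ℝ≥0∞) ≤ t.ncard * c := by
  have hunion : ⋃ i ∈ t, s i = ⋃ i ∈ ht.toFinset, s i := by simp
  calc ((⋃ i ∈ t, s i).ncard : ℝ≥0∞)
      ≤ ∑ i ∈ ht.toFinset, ((s i).ncard : ℝ≥0∞) := by
        rw [hunion]; exact_mod_cast ht.toFinset.set_ncard_biUnion_le s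
    _ ≤ ht.toFinset.card • c :=
        Finset.sum_le_card_nsmul _ _ _ fun i hi => hs i (ht.mem_toFinset.mp hi)
    _ = t.ncard * c := by rw [nsmul_eq_mul, Set.ncard_eq_toFinset_card t ht]

namespace SimpleGraph

variable {V : Type*} {G : SimpleGraph V}

lemma Connected.exists_dist_eq_of_le_dist (hconn : G.Connected) {x z : V} {r : ℕ}
    (hr : r ≤ G.dist x z) : ∃ y, G.dist x y = r ∧ G.dist y z = G.dist x z - r := by
  obtain ⟨w, hw⟩ := hconn.exists_walk_length_eq_dist x z
  have hxy : G.dist x (w.getVert r) ≤ r := (dist_le (w.take r)).trans (by simp)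
  have hyz : G.dist (w.getVert r) z ≤ G.dist x z - r := (dist_le (w.drop r)).trans (by simp [hw])
  have htri : G.dist x z ≤ G.dist x (w.getVert r) + G.dist (w.getVert r) z := hconn.dist_triangle
  exact ⟨w.getVert r, by omega, by omega⟩

lemma Connected.exists_adj_dist_eq_of_dist_eq_succ (hconn : G.Connected) {x z : V} {n : ℕ}
    (hz : G.dist x z = n + 1) : ∃ y, G.Adj y z ∧ G.dist x y = n := by
  obtain ⟨y, hxy, hyz⟩ := hconn.exists_dist_eq_of_le_dist (x := x) (z := z) (r := n) (by omega)
  exact ⟨y, dist_eq_one_iff_adj.mp (by omega), hxy⟩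

lemma Connected.setOf_dist_eq_succ_subset (hconn : G.Connected) (x : V) (n : ℕ) :
    {z | G.dist x z = n + 1} ⊆ ⋃ y ∈ {y | G.dist x y = n}, G.neighborSet y := by
  intro z hz
  obtain ⟨y, hyz, hxy⟩ := hconn.exists_adj_dist_eq_of_dist_eq_succ hz
  exact Set.mem_biUnion hxy hyz

lemma Connected.setOf_dist_eq_zero (hconn : G.Connected) (x : V) : {y | G.dist x y = 0} = {x} := by
  ext y
  simp [hconn.dist_eq_zero_iff, eq_comm]

lemma Connected.finite_setOf_dist_eq (hconn : G.Connected)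
    (hloc : ∀ x : V, (G.neighborSet x).Finite) (x : V) (n : ℕ) :
    {y | G.dist x y = n}.Finite := by
  induction n with
  | zero => rw [hconn.setOf_dist_eq_zero]; exact Set.finite_singleton x
  | succ n ih => exact (ih.biUnion fun y _ => hloc y).subset (hconn.setOf_dist_eq_succ_subset x n)

lemma ncard_neighborSet_le_maxDeg (x : V) : ((G.neighborSet x).ncard : ℝ≥0∞) ≤ maxDeg G :=
  le_iSup (fun x => ((G.neighborSet x).ncard : ℝ≥0∞)) x

lemma Connected.ncard_setOf_dist_eq_le (hconn : G.Connected)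
    (hloc : ∀ x : V, (G.neighborSet x).Finite) (x : V) (n : ℕ) :
    ({y | G.dist x y = n}.ncard : ℝ≥0∞) ≤ maxDeg G ^ n := by
  induction n with
  | zero => rw [hconn.setOf_dist_eq_zero]; simp
  | succ n ih =>
    have hfin := hconn.finite_setOf_dist_eq hloc x n
    calc ({y | G.dist x y = n + 1}.ncard : ℝ≥0∞)
        ≤ (⋃ y ∈ {y | G.dist x y = n}, G.neighborSet y).ncard := by
          exact_mod_cast Set.ncard_le_ncard (hconn.setOf_dist_eq_succ_subset x n)
            (hfin.biUnion fun y _ => hloc y)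
      _ ≤ {y | G.dist x y = n}.ncard * maxDeg G :=
          Set.ncard_biUnion_le_ncard_mul hfin _ fun y _ => ncard_neighborSet_le_maxDeg y
      _ ≤ maxDeg G ^ (n + 1) := by rw [pow_succ]; gcongr

lemma Connected.setOf_dist_le_add (hconn : G.Connected) (x : V) (r s : ℕ) :
    {z | G.dist x z ≤ r + s} =
      {z | G.dist x z ≤ r} ∪ ⋃ y ∈ {y | G.dist x y = r}, {z | G.dist y z ≤ s} := by
  ext z
  simp only [Set.mem_union, Set.mem_ofPred_eq, Set.mem_iUnion, exists_prop]
  constructor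
  · intro hz
    by_cases hle : G.dist x z ≤ r
    · exact Or.inl hle
    · obtain ⟨y, hxy, hyz⟩ :=
        hconn.exists_dist_eq_of_le_dist (x := x) (z := z) (r := r) (by omega)
      exact Or.inr ⟨y, hxy, by omega⟩
  · rintro (hz | ⟨y, hxy, hyz⟩)
    · omega
    · have : G.dist x z ≤ G.dist x y + G.dist y z := hconn.dist_triangle
      omega

lemma ballCard_le_ecpConst_mul (hC : ecpConst G ≠ ⊤) {x y : V} {r : ℕ}
    (hxy : G.dist x y = r) :
    (ballCard G y r : ℝ≥0∞) ≤ ecpConst G * ballCard G x r := by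
  have hle : (ballCard G y (G.dist y x) : ℝ≥0∞) / ballCard G x (G.dist y x) ≤ ecpConst G :=
    le_iSup₂ (f := fun a b : V =>
      (ballCard G a (G.dist a b) : ℝ≥0∞) / (ballCard G b (G.dist a b) : ℝ≥0∞)) y x
  rw [dist_comm, hxy] at hle
  exact (ENNReal.div_le_iff_le_mul (Or.inr hC) (Or.inl (ENNReal.natCast_ne_top _))).mp hle

end SimpleGraph

theorem stmt4_general {V : Type*} (G : SimpleGraph V) (hconn : G.Connected)
    (hloc : ∀ x : V, (G.neighborSet x).Finite)
    (hECP : ecpConst G < ⊤) :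
    ∀ (x : V) (r : ℕ), 1 ≤ r →
      (ballCard G x (2 * r) : ℝ≥0∞) ≤
        (1 + maxDeg G ^ r * ecpConst G) * (ballCard G x r : ℝ≥0∞) := by
  intro x r _
  have hcover := hconn.setOf_dist_le_add x r r
  rw [← two_mul] at hcover
  calc (ballCard G x (2 * r) : ℝ≥0∞)
      ≤ ballCard G x r + (⋃ y ∈ {y | G.dist x y = r}, {z | G.dist y z ≤ r}).ncard := by
        rw [ballCard, ballCard, hcover]; exact_mod_cast Set.ncard_union_le _ _
    _ ≤ ballCard G x r + {y | G.dist x y = r}.ncard * (ecpConst G * ballCard G x r) := by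
        gcongr
        exact Set.ncard_biUnion_le_ncard_mul (hconn.finite_setOf_dist_eq hloc x r) _
          fun y hy => SimpleGraph.ballCard_le_ecpConst_mul hECP.ne hy
    _ ≤ ballCard G x r + maxDeg G ^ r * (ecpConst G * ballCard G x r) := by
        gcongr; exact hconn.ncard_setOf_dist_eq_le hloc x r
    _ = (1 + maxDeg G ^ r * ecpConst G) * ballCard G x r := by ring

theorem stmt4 {V : Type*} (G : SimpleGraph V) (hconn : G.Connected)
    (hloc : ∀ x : V, (G.neighborSet x).Finite) (hV : Infinite V)
    (hECP : ecpConst G < ⊤) (hΔ : maxDeg G < ⊤) :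
    ∀ (x : V) (r : ℕ), 1 ≤ r →
      (ballCard G x (2 * r) : ℝ≥0∞) ≤
        (1 + maxDeg G ^ r * ecpConst G) * (ballCard G x r : ℝ≥0∞) :=
  stmt4_general G hconn hloc hECP
end

section
/- For the infinite k-regular tree T_k with k ≥ 3, the overlapping index is infinite: for every m ∈ ℕ there is a family of balls in T_k such that no subfamily with the same union has overlap bounded by m. -/
open scoped ENNReal

def gball {V : Type*} (G : SimpleGraph V) (p : V × ℕ) : Set V := {y | G.dist p.1 y ≤ p.2}

def OverlapBound {V : Type*} (G : SimpleGraph V) (m : ℕ) : Prop :=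
  ∀ S : Set (V × ℕ), ∃ I ⊆ S, (⋃ p ∈ I, gball G p) = (⋃ p ∈ S, gball G p) ∧
    ∀ z : V, ({p ∈ I | z ∈ gball G p}).encard ≤ m

/-!
Fix a vertex `x` and `m : ℕ`. The balls of radius `m` centred at the points of the sphere
`S(x, m)` all contain `x`. Walking `m` further steps away from `x` from a centre `y` reaches a
point at distance `2m` from `x`; since geodesics in a tree are unique, `y` is the only point of
`S(x, m)` within distance `m` of it, so it lies in no other ball of the family. Hence a subfamily
with the same union is the whole family, whose overlap at `x` is `|S(x, m)|`. In a tree of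
minimum degree `3` every vertex has at least two neighbours farther from `x`, and distinct
vertices of `S(x, m)` have disjoint sets of such neighbours, so `|S(x, m)| ≥ 2 ^ m > m`.
-/

namespace SimpleGraph

variable {V : Type*} {G : SimpleGraph V} {x y z a b : V}

lemma Connected.exists_isPath_getVert_dist_eq (hG : G.Connected)
    (h : G.dist x a + G.dist a z = G.dist x z) :
    ∃ p : G.Walk x z, p.IsPath ∧ p.getVert (G.dist x a) = a := by
  obtain ⟨p, hp⟩ := hG.exists_walk_length_eq_dist x a
  obtain ⟨q, hq⟩ := hG.exists_walk_length_eq_dist a z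
  refine ⟨p.append q, (p.append q).isPath_of_length_eq_dist (by simp [hp, hq, h]), ?_⟩
  simp [← hp, Walk.getVert_append]

lemma IsTree.eq_of_dist_add_dist_eq (hG : G.IsTree)
    (ha : G.dist x a + G.dist a z = G.dist x z) (hb : G.dist x b + G.dist b z = G.dist x z)
    (hab : G.dist x a = G.dist x b) : a = b := by
  obtain ⟨p, hp, hpa⟩ := hG.connected.exists_isPath_getVert_dist_eq ha
  obtain ⟨q, hq, hqb⟩ := hG.connected.exists_isPath_getVert_dist_eq hb
  have hpq : p = q :=
    congrArg Subtype.val ((hG.isAcyclic.subsingleton_path x z).elim ⟨p, hp⟩ ⟨q, hq⟩)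
  rw [← hpa, ← hqb, hpq, hab]

lemma IsTree.subsingleton_adj_dist_le (hG : G.IsTree) (x y : V) :
    {z | G.Adj y z ∧ G.dist x z ≤ G.dist x y}.Subsingleton := by
  have parent : ∀ z ∈ {z | G.Adj y z ∧ G.dist x z ≤ G.dist x y},
      G.dist x z + G.dist z y = G.dist x y ∧ G.dist x z = G.dist x y - 1 := by
    rintro z ⟨hyz, hle⟩
    have := hG.dist_eq_dist_add_one_of_adj x hyz
    rw [dist_eq_one_iff_adj.mpr hyz.symm]
    omega
  intro a ha b hb
  exact hG.eq_of_dist_add_dist_eq (parent a ha).1 (parent b hb).1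
    ((parent a ha).2.trans (parent b hb).2.symm)

lemma IsTree.eq_of_adj_of_dist_eq_add_one (hG : G.IsTree) (ha : G.Adj a z) (hb : G.Adj b z)
    (hax : G.dist x z = G.dist x a + 1) (hbx : G.dist x z = G.dist x b + 1) : a = b :=
  hG.subsingleton_adj_dist_le x z ⟨ha.symm, by omega⟩ ⟨hb.symm, by omega⟩

lemma IsTree.exists_two_adj_dist_eq_add_one (hG : G.IsTree)
    (hdeg : 2 < (G.neighborSet y).encard) (x : V) :
    ∃ z₁ z₂, z₁ ≠ z₂ ∧ G.Adj y z₁ ∧ G.Adj y z₂ ∧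
      G.dist x z₁ = G.dist x y + 1 ∧ G.dist x z₂ = G.dist x y + 1 := by
  set C := {z | G.Adj y z ∧ G.dist x z = G.dist x y + 1}
  have hsplit : G.neighborSet y ⊆ C ∪ {z | G.Adj y z ∧ G.dist x z ≤ G.dist x y} := by
    intro z hz
    rcases hG.dist_eq_dist_add_one_of_adj x hz with h | h
    · exact Or.inr ⟨hz, by omega⟩
    · exact Or.inl ⟨hz, h⟩
  have hC : 1 < C.encard := by
    by_contra! hC
    have := (Set.encard_le_encard hsplit).trans (Set.encard_union_le _ _)
    have hnear := Set.encard_le_one_iff_subsingleton.mpr (hG.subsingleton_adj_dist_le x y)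
    have := hdeg.trans_le (this.trans (add_le_add hC hnear))
    norm_num at this
  obtain ⟨z₁, z₂, ⟨h₁, d₁⟩, ⟨h₂, d₂⟩, hne⟩ := Set.one_lt_encard_iff.mp hC
  exact ⟨z₁, z₂, hne, h₁, h₂, d₁, d₂⟩

lemma IsTree.two_pow_le_encard_dist_eq (hG : G.IsTree)
    (hdeg : ∀ y, 2 < (G.neighborSet y).encard) (x : V) (r : ℕ) :
    2 ^ r ≤ {y | G.dist x y = r}.encard := by
  choose f g hfg hf hg hfd hgd using fun y ↦ hG.exists_two_adj_dist_eq_add_one (hdeg y) x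
  induction r with
  | zero =>
    have : {y | G.dist x y = 0} = {x} := by
      ext y
      simp [hG.connected.dist_eq_zero_iff, eq_comm]
    rw [pow_zero, this, Set.encard_singleton]
  | succ r ih =>
    set S := {y | G.dist x y = r}
    have hf_inj : Set.InjOn f S := fun y _ y' _ h ↦
      hG.eq_of_adj_of_dist_eq_add_one (hf y) (h ▸ hf y') (hfd y) (h ▸ hfd y')
    have hg_inj : Set.InjOn g S := fun y _ y' _ h ↦
      hG.eq_of_adj_of_dist_eq_add_one (hg y) (h ▸ hg y') (hgd y) (h ▸ hgd y')
    have hdisj : Disjoint (f '' S) (g '' S) := by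
      refine Set.disjoint_left.mpr ?_
      rintro _ ⟨y, -, rfl⟩ ⟨y', -, h⟩
      obtain rfl := hG.eq_of_adj_of_dist_eq_add_one (hf y) (h ▸ hg y') (hfd y) (h ▸ hgd y')
      exact hfg y h.symm
    calc 2 ^ (r + 1) = 2 ^ r + 2 ^ r := by ring
      _ ≤ (f '' S).encard + (g '' S).encard := by
        rw [hf_inj.encard_image, hg_inj.encard_image]
        exact add_le_add ih ih
      _ = (f '' S ∪ g '' S).encard := (Set.encard_union_eq hdisj).symm
      _ ≤ {y | G.dist x y = r + 1}.encard := by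
        refine Set.encard_le_encard (Set.union_subset ?_ ?_) <;> rintro _ ⟨y, hy, rfl⟩
        · exact (hfd y).trans (congrArg (· + 1) hy)
        · exact (hgd y).trans (congrArg (· + 1) hy)

lemma Connected.exists_dist_le_dist_eq_add (hG : G.Connected)
    (hout : ∀ y, ∃ z, G.Adj y z ∧ G.dist x z = G.dist x y + 1) (y : V) (t : ℕ) :
    ∃ z, G.dist y z ≤ t ∧ G.dist x z = G.dist x y + t := by
  induction t with
  | zero => exact ⟨y, by simp, rfl⟩
  | succ t ih =>
    obtain ⟨z, hyz, hxz⟩ := ih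
    obtain ⟨z', hzz', hxz'⟩ := hout z
    have := hG.dist_triangle (u := y) (v := z) (w := z')
    rw [dist_eq_one_iff_adj.mpr hzz'] at this
    exact ⟨z', by omega, by omega⟩

lemma IsTree.eq_of_dist_le_of_dist_eq_add (hG : G.IsTree) {r s : ℕ}
    (ha : G.dist x a = r) (hb : G.dist x b = r) (hz : G.dist x z = r + s)
    (haz : G.dist a z ≤ s) (hbz : G.dist b z ≤ s) : a = b := by
  have hxaz := hG.connected.dist_triangle (u := x) (v := a) (w := z)
  have hxbz := hG.connected.dist_triangle (u := x) (v := b) (w := z)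
  exact hG.eq_of_dist_add_dist_eq (z := z) (by omega) (by omega) (ha.trans hb.symm)

end SimpleGraph

lemma OverlapBound.encard_le {V : Type*} {G : SimpleGraph V} {m : ℕ} (h : OverlapBound G m)
    {S : Set (V × ℕ)}
    (hpriv : ∀ p ∈ S, ∃ z ∈ gball G p, ∀ q ∈ S, z ∈ gball G q → q = p) {x : V} (hx : ∀ p ∈ S, x ∈ gball G p) : S.encard ≤ m := by
  obtain ⟨I, hIS, hunion, hover⟩ := h S
  have hSI : S ⊆ I := by
    intro p hp
    obtain ⟨z, hzp, hz⟩ := hpriv p hp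
    have hzI : z ∈ ⋃ q ∈ I, gball G q := by
      rw [hunion]
      exact Set.mem_biUnion hp hzp
    obtain ⟨q, hqI, hzq⟩ := Set.mem_iUnion₂.mp hzI
    exact hz q (hIS hqI) hzq ▸ hqI
  calc S.encard ≤ {p ∈ I | x ∈ gball G p}.encard :=
        Set.encard_le_encard fun p hp ↦ ⟨hSI hp, hx p hp⟩
    _ ≤ m := hover x

theorem stmt10_general {V : Type*} (G : SimpleGraph V) (htree : G.IsTree)
    (k : ℕ) (hk : 3 ≤ k) (hreg : ∀ x : V, (G.neighborSet x).ncard = k) :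
    ∀ m : ℕ, ¬ OverlapBound G m := by
  intro m hm
  obtain ⟨x⟩ := htree.connected.nonempty
  have hdeg (y : V) : 2 < (G.neighborSet y).encard := by
    have hfin := Set.finite_of_ncard_ne_zero (s := G.neighborSet y) (by rw [hreg y]; omega)
    rw [← hfin.cast_ncard_eq, hreg y]
    exact_mod_cast hk
  have hout (y : V) : ∃ z, G.Adj y z ∧ G.dist x z = G.dist x y + 1 := by
    obtain ⟨z, -, -, hyz, -, hxz, -⟩ := htree.exists_two_adj_dist_eq_add_one (hdeg y) x
    exact ⟨z, hyz, hxz⟩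
  set S : Set (V × ℕ) := (·, m) '' {y | G.dist x y = m}
  have hS : S.encard ≤ m := by
    refine hm.encard_le ?_ (x := x) ?_
    · rintro _ ⟨y, hy, rfl⟩
      obtain ⟨z, hyz, hxz⟩ := htree.connected.exists_dist_le_dist_eq_add hout y m
      refine ⟨z, hyz, ?_⟩
      rintro _ ⟨y', hy', rfl⟩ hy'z
      rw [htree.eq_of_dist_le_of_dist_eq_add hy' hy (hxz.trans (by rw [hy])) hy'z hyz]
    · rintro _ ⟨y, hy, rfl⟩
      exact (G.dist_comm).trans_le hy.le
  have hcard : 2 ^ m ≤ S.encard := by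
    rw [(Prod.mk_left_injective m).encard_image]
    exact htree.two_pow_le_encard_dist_eq hdeg x m
  exact Nat.lt_two_pow_self.not_ge (by exact_mod_cast hcard.trans hS)

theorem stmt10 {V : Type*} (G : SimpleGraph V) (hV : Infinite V) (htree : G.IsTree)
    (k : ℕ) (hk : 3 ≤ k) (hreg : ∀ x : V, (G.neighborSet x).ncard = k) :
    ∀ m : ℕ, ¬ OverlapBound G m :=
  stmt10_general G htree k hk hreg
end

section
/- For the infinite comb graph Ш_∞, the ball of center (j,k) and radius r ∈ ℕ has cardinality 2r+1 if r < k, and (r−k+1)² + 2k if r ≥ k. -/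
open scoped ENNReal

/-- The infinite comb graph `Ш_∞`, with vertex set `ℤ × ℕ`. -/
def comb : SimpleGraph (ℤ × ℕ) :=
  SimpleGraph.fromRel (fun p q =>
    ((p.1 - q.1).natAbs = 1 ∧ p.2 = 0 ∧ q.2 = 0) ∨ (p.1 = q.1 ∧ p.2 = q.2 + 1))

namespace CombAux

open SimpleGraph

/-- The distance function of the comb. -/
def D (x y : ℤ × ℕ) : ℕ :=
  if x.1 = y.1 then ((x.2 : ℤ) - y.2).natAbs else x.2 + (x.1 - y.1).natAbs + y.2

lemma D_same (j : ℤ) (k k' : ℕ) : D (j, k) (j, k') = ((k : ℤ) - k').natAbs := if_pos rfl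

lemma D_ne {j a : ℤ} (h : j ≠ a) (k b : ℕ) :
    D (j, k) (a, b) = k + (j - a).natAbs + b := if_neg h

lemma adj_tooth (j : ℤ) (k : ℕ) : comb.Adj (j, k + 1) (j, k) := by
  rw [comb, SimpleGraph.fromRel_adj]
  exact ⟨by simp, Or.inl (Or.inr ⟨rfl, rfl⟩)⟩

lemma adj_spine (j : ℤ) : comb.Adj (j, 0) (j + 1, 0) := by
  rw [comb, SimpleGraph.fromRel_adj]
  exact ⟨by simp [Prod.ext_iff], Or.inl (Or.inl ⟨by omega, rfl, rfl⟩)⟩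

lemma walk_down (j : ℤ) (a n : ℕ) : ∃ w : comb.Walk (j, a + n) (j, a), w.length = n := by
  induction n with
  | zero => exact ⟨.nil, rfl⟩
  | succ n ih =>
    obtain ⟨w, hw⟩ := ih
    exact ⟨.cons (adj_tooth j (a + n)) w, by simp [hw]⟩

lemma walk_right (j : ℤ) (n : ℕ) :
    ∃ w : comb.Walk (j, 0) ((j + n : ℤ), 0), w.length = n := by
  induction n with
  | zero => exact ⟨Walk.nil.copy rfl (by simp), by simp⟩
  | succ n ih =>
    obtain ⟨w, hw⟩ := ih
    refine ⟨(w.append (Walk.cons (adj_spine (j + n)) Walk.nil)).copy rfl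
      (Prod.ext (by push_cast; ring) rfl), ?_⟩
    simp [hw]

lemma walk_spine (a b : ℤ) :
    ∃ w : comb.Walk (a, 0) (b, 0), w.length = (a - b).natAbs := by
  rcases le_total a b with h | h
  · obtain ⟨w, hw⟩ := walk_right a (b - a).toNat
    refine ⟨w.copy rfl (by rw [Prod.mk.injEq]; constructor <;> omega), ?_⟩
    rw [SimpleGraph.Walk.length_copy, hw]; omega
  · obtain ⟨w, hw⟩ := walk_right b (a - b).toNat
    refine ⟨(w.copy rfl (by rw [Prod.mk.injEq]; constructor <;> omega)).reverse, ?_⟩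
    rw [SimpleGraph.Walk.length_reverse, SimpleGraph.Walk.length_copy, hw]; omega

lemma exists_walk_D (x y : ℤ × ℕ) : ∃ w : comb.Walk x y, w.length = D x y := by
  obtain ⟨j1, k1⟩ := x; obtain ⟨j2, k2⟩ := y
  by_cases h : j1 = j2
  · subst h
    rcases le_total k1 k2 with hk | hk
    · obtain ⟨w, hw⟩ := walk_down j1 k1 (k2 - k1)
      refine ⟨(w.copy (by rw [Prod.mk.injEq]; constructor <;> omega) rfl).reverse, ?_⟩
      rw [SimpleGraph.Walk.length_reverse, SimpleGraph.Walk.length_copy, hw, D_same]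
      omega
    · obtain ⟨w, hw⟩ := walk_down j1 k2 (k1 - k2)
      refine ⟨w.copy (by rw [Prod.mk.injEq]; constructor <;> omega) rfl, ?_⟩
      rw [SimpleGraph.Walk.length_copy, hw, D_same]
      omega
  · obtain ⟨w1, h1⟩ := walk_down j1 0 k1
    obtain ⟨w2, h2⟩ := walk_spine j1 j2
    obtain ⟨w3, h3⟩ := walk_down j2 0 k2
    refine ⟨(w1.copy (by rw [Prod.mk.injEq]; constructor <;> omega) rfl).append (w2.append
      (w3.copy (by rw [Prod.mk.injEq]; constructor <;> omega) rfl).reverse), ?_⟩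
    simp only [SimpleGraph.Walk.length_append, SimpleGraph.Walk.length_copy,
      SimpleGraph.Walk.length_reverse, h1, h2, h3]
    rw [D_ne h]
    omega

lemma lipschitz (x : ℤ × ℕ) {u v : ℤ × ℕ} (h : comb.Adj u v) : D x v ≤ D x u + 1 := by
  obtain ⟨j, k⟩ := x; obtain ⟨a, ha⟩ := u; obtain ⟨b, hb⟩ := v
  rw [comb, SimpleGraph.fromRel_adj] at h
  obtain ⟨-, h | h⟩ := h <;>
    rcases h with ⟨h1, h2, h3⟩ | ⟨h1, h2⟩ <;>
    simp only [D] <;> split_ifs <;> omega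

lemma D_le_length (x : ℤ × ℕ) : ∀ {u v : ℤ × ℕ} (w : comb.Walk u v),
    D x v ≤ D x u + w.length
  | _, _, .nil => by simp
  | _, _, .cons h w => by
    have h1 := D_le_length x w
    have h2 := lipschitz x h
    simp only [SimpleGraph.Walk.length_cons]
    omega

lemma dist_eq (x y : ℤ × ℕ) : comb.dist x y = D x y := by
  obtain ⟨w, hw⟩ := exists_walk_D x y
  refine le_antisymm (hw ▸ SimpleGraph.dist_le w) ?_
  have hr : comb.Reachable x y := ⟨w⟩
  obtain ⟨p, hp⟩ := hr.exists_walk_length_eq_dist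
  have := D_le_length x p
  have hx : D x x = 0 := by simp [D]
  omega

lemma tri (s : ℕ) : 2 * ∑ m ∈ Finset.Icc 1 s, (s + 1 - m) = s * (s + 1) := by
  induction s with
  | zero => simp
  | succ n ih =>
    rw [Finset.sum_Icc_succ_top (by omega)]
    have h : ∑ m ∈ Finset.Icc 1 n, (n + 1 + 1 - m) =
        ∑ m ∈ Finset.Icc 1 n, ((n + 1 - m) + 1) :=
      Finset.sum_congr rfl (fun m hm => by have := Finset.mem_Icc.mp hm; omega)
    rw [h, Finset.sum_add_distrib, Finset.sum_const, smul_eq_mul, Nat.card_Icc]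
    have hn : n + 1 - 1 = n := by omega
    have hn2 : n + 1 + 1 - (n + 1) = 1 := by omega
    rw [hn, hn2]
    zify at ih ⊢
    linear_combination ih

end CombAux

theorem stmt13 : ∀ (j : ℤ) (k r : ℕ),
    (r < k → ballCard comb (j, k) r = 2 * r + 1) ∧
    (k ≤ r → ballCard comb (j, k) r = (r - k + 1) ^ 2 + 2 * k) := by
  intro j k r
  have hball : {y | comb.dist (j, k) y ≤ r} = {y | CombAux.D (j, k) y ≤ r} := by
    ext y; simp [CombAux.dist_eq]
  constructor
  · -- case r < k
    intro hrk
    have hset : {y | comb.dist (j, k) y ≤ r} =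
        ↑((Finset.Icc (k - r) (k + r)).image (fun k' => ((j, k') : ℤ × ℕ))) := by
      rw [hball]
      ext ⟨a, b⟩
      simp only [Set.mem_setOf_eq, Finset.coe_image, Set.mem_image, Finset.mem_coe,
        Finset.mem_Icc, Prod.mk.injEq]
      constructor
      · intro h
        by_cases hj : j = a
        · subst hj
          rw [CombAux.D_same] at h
          exact ⟨b, by omega, rfl, rfl⟩
        · rw [CombAux.D_ne hj] at h
          exfalso; omega
      · rintro ⟨c, hc, rfl, rfl⟩
        rw [CombAux.D_same]
        omega
    rw [ballCard, hset, Set.ncard_coe_finset,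
      Finset.card_image_of_injective _ (fun a b hab => by simpa using hab),
      Nat.card_Icc]
    omega
  · -- case k ≤ r
    intro hkr
    set s := r - k with hs
    set colF : Finset (ℤ × ℕ) := (Finset.range (k + r + 1)).image (fun k' => ((j, k') : ℤ × ℕ))
      with hcolF
    set rightF : Finset (ℤ × ℕ) := (Finset.Icc 1 s).biUnion
      (fun m => (Finset.range (s + 1 - m)).image (fun k' => ((j + m, k') : ℤ × ℕ))) with hrightF
    set leftF : Finset (ℤ × ℕ) := (Finset.Icc 1 s).biUnion
      (fun m => (Finset.range (s + 1 - m)).image (fun k' => ((j - m, k') : ℤ × ℕ))) with hleftF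
    have hset : {y | comb.dist (j, k) y ≤ r} = ↑(colF ∪ rightF ∪ leftF) := by
      rw [hball]
      ext ⟨a, b⟩
      simp only [hcolF, hrightF, hleftF, Finset.coe_union, Set.mem_union, Set.mem_setOf_eq,
        Finset.coe_image, Set.mem_image, Finset.mem_coe, Finset.coe_biUnion, Set.mem_iUnion,
        Finset.mem_Icc, Finset.mem_range, Prod.mk.injEq]
      constructor
      · intro h
        by_cases hj : j = a
        · subst hj
          rw [CombAux.D_same] at h
          exact Or.inl (Or.inl ⟨b, by omega, rfl, rfl⟩)
        · rw [CombAux.D_ne hj] at h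
          set m := (j - a).natAbs with hm
          rcases lt_trichotomy j a with hlt | heq | hgt
          · exact Or.inl (Or.inr ⟨m, ⟨by omega, by omega⟩, b, by omega, by omega, rfl⟩)
          · exact absurd heq hj
          · exact Or.inr ⟨m, ⟨by omega, by omega⟩, b, by omega, by omega, rfl⟩
      · rintro ((⟨c, hc, rfl, rfl⟩ | ⟨m, hm, c, hc, rfl, rfl⟩) | ⟨m, hm, c, hc, rfl, rfl⟩)
        · rw [CombAux.D_same]; omega
        · rw [CombAux.D_ne (by omega)]; omega
        · rw [CombAux.D_ne (by omega)]; omega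
    have hinj : ∀ c : ℤ, Function.Injective (fun k' : ℕ => ((c, k') : ℤ × ℕ)) :=
      fun c a b hab => by simpa using hab
    have hcard_col : colF.card = k + r + 1 := by
      rw [hcolF, Finset.card_image_of_injective _ (hinj j), Finset.card_range]
    have hbi : ∀ (f : ℕ → ℤ), Function.Injective f →
        ((Finset.Icc 1 s).biUnion
          (fun m => (Finset.range (s + 1 - m)).image (fun k' => ((f m, k') : ℤ × ℕ)))).card =
        ∑ m ∈ Finset.Icc 1 s, (s + 1 - m) := by
      intro f hf
      rw [Finset.card_biUnion]
      · exact Finset.sum_congr rfl (fun m _ => by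
          rw [Finset.card_image_of_injective _ (hinj (f m)), Finset.card_range])
      · intro m _ m' _ hne
        simp only [Finset.disjoint_left]
        rintro ⟨a, b⟩ h1 h2
        simp only [Finset.mem_image, Finset.mem_range, Prod.mk.injEq] at h1 h2
        obtain ⟨c, _, rfl, rfl⟩ := h1
        obtain ⟨c', _, hfc, -⟩ := h2
        exact hne (hf hfc.symm)
    have hcard_right : rightF.card = ∑ m ∈ Finset.Icc 1 s, (s + 1 - m) :=
      hbi (fun m => j + m) (fun a b hab => by dsimp only at hab; omega)
    have hcard_left : leftF.card = ∑ m ∈ Finset.Icc 1 s, (s + 1 - m) :=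
      hbi (fun m => j - m) (fun a b hab => by dsimp only at hab; omega)
    have hd1 : Disjoint colF rightF := by
      simp only [Finset.disjoint_left]
      rintro ⟨a, b⟩ h1 h2
      simp only [hcolF, hrightF, Finset.mem_image, Finset.mem_biUnion, Finset.mem_range,
        Finset.mem_Icc, Prod.mk.injEq] at h1 h2
      obtain ⟨c, _, rfl, rfl⟩ := h1
      obtain ⟨m, hm, c', _, hj', -⟩ := h2
      omega
    have hd2 : Disjoint colF leftF := by
      simp only [Finset.disjoint_left]
      rintro ⟨a, b⟩ h1 h2
      simp only [hcolF, hleftF, Finset.mem_image, Finset.mem_biUnion, Finset.mem_range,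
        Finset.mem_Icc, Prod.mk.injEq] at h1 h2
      obtain ⟨c, _, rfl, rfl⟩ := h1
      obtain ⟨m, hm, c', _, hj', -⟩ := h2
      omega
    have hd3 : Disjoint rightF leftF := by
      simp only [Finset.disjoint_left]
      rintro ⟨a, b⟩ h1 h2
      simp only [hrightF, hleftF, Finset.mem_image, Finset.mem_biUnion, Finset.mem_range,
        Finset.mem_Icc, Prod.mk.injEq] at h1 h2
      obtain ⟨m, hm, c, _, rfl, rfl⟩ := h1
      obtain ⟨m', hm', c', _, hj', -⟩ := h2
      omega
    have hdu : Disjoint (colF ∪ rightF) leftF := Finset.disjoint_union_left.mpr ⟨hd2, hd3⟩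
    rw [ballCard, hset, Set.ncard_coe_finset, Finset.card_union_of_disjoint hdu,
      Finset.card_union_of_disjoint hd1, hcard_col, hcard_right, hcard_left]
    have htri := CombAux.tri s
    have hrs : r = k + s := by omega
    nlinarith [htri, hrs]
end

section
/- For the steplike dyadic tree Υ₂^∞, every ball satisfies r ≤ |B(x,r)| ≤ 24r for all vertices x and integers r ≥ 1. -/
open scoped ENNReal

/-- Vertices of the steplike dyadic tree `Υ₂^∞`: the half-line `{(j,0) : j ≥ 1}` together
with a tooth `{(2^n,k) : 0 ≤ k ≤ 2^n}` above each power of two. -/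
def DyadV : Type := {p : ℕ × ℕ // 1 ≤ p.1 ∧ (p.2 = 0 ∨ (p.2 ≤ p.1 ∧ ∃ n : ℕ, p.1 = 2 ^ n))}

/-- The steplike dyadic tree `Υ₂^∞`. -/
def dyad : SimpleGraph DyadV :=
  SimpleGraph.fromRel (fun p q =>
    (p.1.1 = q.1.1 + 1 ∧ p.1.2 = 0 ∧ q.1.2 = 0) ∨ (p.1.1 = q.1.1 ∧ p.1.2 = q.1.2 + 1))

/-!
Both coordinates `j` and `k` of a vertex `(j, k)` change by at most one along an edge, so the ball
`B(x, r)` around `x = (a, b)` lies in the box `|j - a| ≤ r`, `|k - b| ≤ r`. A point of the ball lies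
on the half-line (at most `2r + 1` points), on a tooth of height `2^n ≤ 2r` (fewer than `4r` points
altogether, by the geometric sum), or on a tooth of height `2^n > 2r` whose foot is within `r` of
`a`. Two such feet differ by more than `2r`, so there is at most one such tooth, contributing at
most `2r + 1` points. Hence `|B(x, r)| ≤ 8r + 1 ≤ 24r`. For the lower bound, a geodesic from `x`
to `(a + r, 0)`, a vertex at distance at least `r`, has `r + 1` distinct vertices in the ball.
-/

open Finset

namespace SimpleGraph

variable {V : Type*} {G : SimpleGraph V}

theorem reachable_of_exists_adj_lt (x₀ : V) (f : V → ℕ)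
    (h : ∀ v, v ≠ x₀ → ∃ w, G.Adj v w ∧ f w < f v) (v : V) : G.Reachable v x₀ := by
  by_cases hv : v = x₀
  · exact hv ▸ .refl _
  obtain ⟨w, hvw, hw⟩ := h v hv
  exact hvw.reachable.trans (reachable_of_exists_adj_lt x₀ f h w)
termination_by f v

theorem Walk.le_add_length (f : V → ℕ) (hf : ∀ x y, G.Adj x y → f x ≤ f y + 1)
    {u v : V} (w : G.Walk u v) : f u ≤ f v + w.length := by
  induction w with
  | nil => simp
  | cons hadj w ih => have := hf _ _ hadj; simp only [Walk.length_cons]; omega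

theorem Reachable.le_add_dist (f : V → ℕ) (hf : ∀ x y, G.Adj x y → f x ≤ f y + 1)
    {u v : V} (h : G.Reachable u v) : f u ≤ f v + G.dist u v := by
  obtain ⟨w, hw⟩ := h.exists_walk_length_eq_dist
  exact hw ▸ w.le_add_length f hf

theorem Reachable.succ_le_ncard_ball {x y : V} {r : ℕ} (hxy : G.Reachable x y)
    (hr : r ≤ G.dist x y) (hfin : {z | G.dist x z ≤ r}.Finite) :
    r + 1 ≤ {z | G.dist x z ≤ r}.ncard := by
  obtain ⟨w, hpath, hlen⟩ := hxy.exists_path_of_dist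
  rw [← Set.ncard_Iic_nat]
  refine Set.ncard_le_ncard_of_injOn w.getVert (fun i hi => ?_)
    (hpath.getVert_injOn.mono fun i hi => ?_) hfin
  · rw [Set.mem_Iic] at hi
    exact (dist_le (w.take i)).trans (by rw [Walk.take_length]; omega)
  · rw [Set.mem_Iic] at hi
    exact hlen ▸ hi.trans hr

end SimpleGraph

theorem Nat.eq_of_two_pow_le_two_pow_add {m n d : ℕ} (hm : d < 2 ^ m) (hn : d < 2 ^ n)
    (hmn : 2 ^ m ≤ 2 ^ n + d) (hnm : 2 ^ n ≤ 2 ^ m + d) : m = n := by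
  by_contra hne
  rcases Nat.lt_or_gt_of_ne hne with h | h
  · have := Nat.pow_le_pow_right two_pos h; rw [pow_succ] at this; omega
  · have := Nat.pow_le_pow_right two_pos h; rw [pow_succ] at this; omega

theorem Nat.sum_range_succ_log_two_pow_lt {c : ℕ} (hc : c ≠ 0) :
    ∑ n ∈ range (Nat.log 2 c + 1), 2 ^ n < 2 * c :=
  calc ∑ n ∈ range (Nat.log 2 c + 1), 2 ^ n < 2 ^ (Nat.log 2 c + 1) :=
        Nat.geomSum_lt le_rfl fun _ => Finset.mem_range.mp
    _ ≤ 2 * c := by rw [pow_succ, mul_comm]; exact Nat.mul_le_mul_left 2 (Nat.pow_log_le_self 2 hc)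

theorem dyad_adj_iff {p q : DyadV} : dyad.Adj p q ↔ p ≠ q ∧
    (((p.1.1 = q.1.1 + 1 ∧ p.1.2 = 0 ∧ q.1.2 = 0) ∨ (p.1.1 = q.1.1 ∧ p.1.2 = q.1.2 + 1)) ∨
     ((q.1.1 = p.1.1 + 1 ∧ q.1.2 = 0 ∧ p.1.2 = 0) ∨ (q.1.1 = p.1.1 ∧ q.1.2 = p.1.2 + 1))) := by
  simp [dyad, SimpleGraph.fromRel_adj]

theorem dyad_adj_le {p q : DyadV} (h : dyad.Adj p q) :
    p.1.1 ≤ q.1.1 + 1 ∧ p.1.2 ≤ q.1.2 + 1 := by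
  rcases (dyad_adj_iff.mp h).2 with (h | h) | (h | h) <;> omega

def DyadV.root : DyadV := ⟨(1, 0), le_rfl, Or.inl rfl⟩

theorem DyadV.exists_adj_lt {p : DyadV} (hp : p ≠ .root) :
    ∃ q, dyad.Adj p q ∧ q.1.1 + q.1.2 < p.1.1 + p.1.2 := by
  obtain ⟨⟨j, k⟩, hj, hk⟩ := p
  dsimp only at hj hk ⊢
  rcases Nat.eq_zero_or_pos k with rfl | hk0
  · have hj1 : 1 < j := lt_of_le_of_ne hj fun h => hp (by subst h; rfl)
    refine ⟨⟨(j - 1, 0), by omega, Or.inl rfl⟩, dyad_adj_iff.mpr ⟨?_, ?_⟩, by dsimp only; omega⟩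
    · intro h; have := congrArg (·.1.1) h; dsimp only at this; omega
    · dsimp only; omega
  · refine ⟨⟨(j, k - 1), hj, ?_⟩, dyad_adj_iff.mpr ⟨?_, ?_⟩, by dsimp only; omega⟩
    · rcases hk with hk | ⟨hkj, hpow⟩
      · omega
      · exact Or.inr ⟨by dsimp only; omega, hpow⟩
    · intro h; have := congrArg (·.1.2) h; dsimp only at this; omega
    · dsimp only; omega

theorem dyad_connected : dyad.Connected :=
  (dyad.connected_iff_exists_forall_reachable).mpr ⟨.root, fun p =>
    (SimpleGraph.reachable_of_exists_adj_lt _ (fun q => q.1.1 + q.1.2)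
      (fun _ hp => DyadV.exists_adj_lt hp) p).symm⟩

theorem dyad_fst_le_add_dist (p q : DyadV) : p.1.1 ≤ q.1.1 + dyad.dist p q :=
  (dyad_connected.preconnected p q).le_add_dist (·.1.1) fun _ _ h => (dyad_adj_le h).1

theorem dyad_snd_le_add_dist (p q : DyadV) : p.1.2 ≤ q.1.2 + dyad.dist p q :=
  (dyad_connected.preconnected p q).le_add_dist (·.1.2) fun _ _ h => (dyad_adj_le h).2

def lowTeeth (c : ℕ) : Finset (ℕ × ℕ) :=
  (range (Nat.log 2 c + 1)).biUnion fun n => {2 ^ n} ×ˢ Icc 1 (2 ^ n)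

theorem card_lowTeeth_lt {c : ℕ} (hc : c ≠ 0) : #(lowTeeth c) < 2 * c :=
  calc #(lowTeeth c) ≤ ∑ n ∈ range (Nat.log 2 c + 1), #({2 ^ n} ×ˢ Icc 1 (2 ^ n)) :=
        card_biUnion_le
    _ = ∑ n ∈ range (Nat.log 2 c + 1), 2 ^ n := by simp
    _ < 2 * c := Nat.sum_range_succ_log_two_pow_lt hc

open Classical in
noncomputable def tallTeethNear (a b r : ℕ) : Finset (ℕ × ℕ) :=
  {j ∈ Icc (a - r) (a + r) | 2 * r < j ∧ ∃ n, j = 2 ^ n} ×ˢ Icc (b - r) (b + r)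

open Classical in
theorem card_tallTeethNear_le (a b r : ℕ) : #(tallTeethNear a b r) ≤ 2 * r + 1 := by
  have hone : #{j ∈ Icc (a - r) (a + r) | 2 * r < j ∧ ∃ n, j = 2 ^ n} ≤ 1 := by
    refine card_le_one.mpr fun j hj j' hj' => ?_
    simp only [mem_filter, mem_Icc] at hj hj'
    obtain ⟨_, hj, m, rfl⟩ := hj
    obtain ⟨_, hj', n, rfl⟩ := hj'
    rw [Nat.eq_of_two_pow_le_two_pow_add hj hj' (by omega) (by omega)]
  have hIcc : #(Icc (b - r) (b + r)) ≤ 2 * r + 1 := by simp only [Nat.card_Icc]; omega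
  rw [tallTeethNear, card_product]
  simpa using Nat.mul_le_mul hone hIcc

noncomputable def dyadBallCover (a b r : ℕ) : Finset (ℕ × ℕ) :=
  Icc (a - r) (a + r) ×ˢ {0} ∪ lowTeeth (2 * r) ∪ tallTeethNear a b r

theorem card_dyadBallCover_le {r : ℕ} (hr : r ≠ 0) (a b : ℕ) :
    #(dyadBallCover a b r) ≤ 8 * r + 1 := by
  have hline : #(Icc (a - r) (a + r) ×ˢ {0}) ≤ 2 * r + 1 := by
    simp only [card_product, Nat.card_Icc, card_singleton]; omega
  have := card_lowTeeth_lt (c := 2 * r) (by omega)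
  have := card_tallTeethNear_le a b r
  have := card_union_le (Icc (a - r) (a + r) ×ˢ {0} ∪ lowTeeth (2 * r)) (tallTeethNear a b r)
  have := card_union_le (Icc (a - r) (a + r) ×ˢ {0}) (lowTeeth (2 * r))
  unfold dyadBallCover
  omega

theorem val_mem_dyadBallCover {x y : DyadV} {r : ℕ} (h : dyad.dist x y ≤ r) :
    y.1 ∈ dyadBallCover x.1.1 x.1.2 r := by
  classical
  have hj : y.1.1 ∈ Icc (x.1.1 - r) (x.1.1 + r) := by
    have := dyad_fst_le_add_dist x y
    have := dyad_fst_le_add_dist y x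
    rw [dyad.dist_comm] at this
    simp only [mem_Icc]; omega
  have hk : y.1.2 ∈ Icc (x.1.2 - r) (x.1.2 + r) := by
    have := dyad_snd_le_add_dist x y
    have := dyad_snd_le_add_dist y x
    rw [dyad.dist_comm] at this
    simp only [mem_Icc]; omega
  obtain ⟨⟨j, k⟩, _, hk0 | ⟨hkj, n, hn⟩⟩ := y
  · dsimp only at hk0
    subst hk0
    exact mem_union_left _ (mem_union_left _ (mem_product.mpr ⟨hj, mem_singleton_self 0⟩))
  dsimp only at hj hk hkj hn
  subst hn
  rcases Nat.eq_zero_or_pos k with rfl | hk0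
  · exact mem_union_left _ (mem_union_left _ (mem_product.mpr ⟨hj, mem_singleton_self 0⟩))
  by_cases hlow : 2 ^ n ≤ 2 * r
  · refine mem_union_left _ (mem_union_right _ (mem_biUnion.mpr ⟨n, ?_, ?_⟩))
    · exact mem_range.mpr (Nat.lt_succ_of_le (Nat.le_log_of_pow_le one_lt_two hlow))
    · simp only [mem_product, mem_singleton, mem_Icc]; exact ⟨trivial, hk0, hkj⟩
  · refine mem_union_right _ (mem_product.mpr ⟨mem_filter.mpr ⟨hj, not_le.mp hlow, n, rfl⟩, hk⟩)

theorem stmt15 : ∀ (x : DyadV) (r : ℕ), 1 ≤ r →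
    r ≤ ballCard dyad x r ∧ ballCard dyad x r ≤ 24 * r := by
  intro x r hr
  have hcover : ∀ y ∈ {y | dyad.dist x y ≤ r}, y.1 ∈ dyadBallCover x.1.1 x.1.2 r :=
    fun _ => val_mem_dyadBallCover
  have hfin : {y | dyad.dist x y ≤ r}.Finite :=
    ((dyadBallCover x.1.1 x.1.2 r).finite_toSet.preimage Subtype.val_injective.injOn).subset
      hcover
  have hupper : ballCard dyad x r ≤ 8 * r + 1 :=
    (Set.ncard_le_ncard_of_injOn _ hcover Subtype.val_injective.injOn (finite_toSet _)).trans
      (by simpa using card_dyadBallCover_le (by omega) x.1.1 x.1.2)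
  let y : DyadV := ⟨(x.1.1 + r, 0), by omega, Or.inl rfl⟩
  have hfar : r ≤ dyad.dist x y := by
    have h := dyad_fst_le_add_dist y x
    rw [dyad.dist_comm] at h
    exact Nat.le_of_add_le_add_left h
  have hlower := (dyad_connected.preconnected x y).succ_le_ncard_ball hfar hfin
  exact ⟨by unfold ballCard; omega, by omega⟩
end

section
/- For the steplike dyadic tree Υ₂^∞, the overlapping index is infinite: the family of balls {B_n}_{n≥1}, where B_n has center (2^n,1) and radius 2^n, all contain the vertex (1,0), yet for each m ≥ 1 the vertex (2^m,2^m) lies in B_m and in no other B_n; hence no proper subfamily has the same union and any subfamily with the same union must contain all B_n, whose overlap at (1,0) is unbounded. -/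
open scoped ENNReal

noncomputable def overIndex {V : Type*} (G : SimpleGraph V) : ℕ∞ :=
  sInf ((fun m : ℕ => (m : ℕ∞)) '' {m | OverlapBound G m})

/-! ### Auxiliary constructions -/

lemma opow (n : ℕ) : 1 ≤ 2 ^ n := Nat.one_le_two_pow

/-- spine vertex `(j+1, 0)` -/
def spineV (j : ℕ) : DyadV := ⟨(j + 1, 0), by omega, Or.inl rfl⟩

/-- column vertex `(2^n, k)` for `k ≤ 2^n` -/
def colV (n k : ℕ) (h : k ≤ 2 ^ n) : DyadV :=
  ⟨(2 ^ n, k), opow n, Or.inr ⟨h, n, rfl⟩⟩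

lemma adj_spine (j : ℕ) : dyad.Adj (spineV (j + 1)) (spineV j) := by
  rw [dyad, SimpleGraph.fromRel_adj]
  refine ⟨?_, Or.inl (Or.inl ⟨rfl, rfl, rfl⟩)⟩
  intro h
  have : j + 1 + 1 = j + 1 := congrArg (fun v : DyadV => v.1.1) h
  omega

lemma adj_col (n k : ℕ) (h : k + 1 ≤ 2 ^ n) :
    dyad.Adj (colV n (k + 1) h) (colV n k (by omega)) := by
  rw [dyad, SimpleGraph.fromRel_adj]
  refine ⟨?_, Or.inl (Or.inr ⟨rfl, rfl⟩)⟩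
  intro h'
  have : k + 1 = k := congrArg (fun v : DyadV => v.1.2) h'
  omega

def spineWalk : (j : ℕ) → dyad.Walk (spineV j) (spineV 0)
  | 0 => SimpleGraph.Walk.nil
  | j + 1 => SimpleGraph.Walk.cons (adj_spine j) (spineWalk j)

lemma spineWalk_length (j : ℕ) : (spineWalk j).length = j := by
  induction j with
  | zero => rfl
  | succ j ih => simp [spineWalk, ih]

def colWalk (n : ℕ) : (k : ℕ) → (h : k ≤ 2 ^ n) → dyad.Walk (colV n k h) (colV n 0 (Nat.zero_le _))
  | 0, _ => SimpleGraph.Walk.nil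
  | k + 1, h => SimpleGraph.Walk.cons (adj_col n k h) (colWalk n k (by omega))

lemma colWalk_length (n k : ℕ) (h : k ≤ 2 ^ n) : (colWalk n k h).length = k := by
  induction k with
  | zero => rfl
  | succ k ih => simp [colWalk, ih]

/-- walk within a column from level `k+1` down to level `1`. -/
def colWalk1 (n : ℕ) : (k : ℕ) → (h : k + 1 ≤ 2 ^ n) →
    dyad.Walk (colV n (k + 1) h) (colV n 1 (opow n))
  | 0, _ => SimpleGraph.Walk.nil
  | k + 1, h => SimpleGraph.Walk.cons (adj_col n (k + 1) h) (colWalk1 n k (by omega))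

lemma colWalk1_length (n k : ℕ) (h : k + 1 ≤ 2 ^ n) : (colWalk1 n k h).length = k := by
  induction k with
  | zero => rfl
  | succ k ih => simp [colWalk1, ih]

lemma colV_zero_eq (n : ℕ) : colV n 0 (Nat.zero_le _) = spineV (2 ^ n - 1) := by
  apply Subtype.ext
  have : 1 ≤ 2 ^ n := opow n
  simp [colV, spineV]
  omega

lemma reach_spine0 (v : DyadV) : dyad.Reachable v (spineV 0) := by
  obtain ⟨⟨j, k⟩, hj, hk | ⟨hk, n, hn⟩⟩ := v
  · have he : (⟨(j, k), hj, Or.inl hk⟩ : DyadV) = spineV (j - 1) := by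
      apply Subtype.ext; simp only at hj hk; simp [spineV]; omega
    rw [he]; exact ⟨spineWalk _⟩
  · simp only at hk hn
    have he : (⟨(j, k), hj, Or.inr ⟨hk, n, hn⟩⟩ : DyadV) = colV n k (by omega) := by
      apply Subtype.ext; simp [colV, hn]
    rw [he]
    exact ⟨((colWalk n k _).copy rfl (colV_zero_eq n)).append (spineWalk _)⟩

/-- potential function used for distance lower bounds -/
def pot (a b : ℕ) (v : DyadV) : ℤ :=
  if v.1.1 = 2 ^ a then (v.1.1 : ℤ) + v.1.2
  else if v.1.1 = 2 ^ b then (v.1.1 : ℤ) - v.1.2 else (v.1.1 : ℤ)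

lemma pot_rel (a b : ℕ) (u v : DyadV)
    (h : (u.1.1 = v.1.1 + 1 ∧ u.1.2 = 0 ∧ v.1.2 = 0) ∨ (u.1.1 = v.1.1 ∧ u.1.2 = v.1.2 + 1)) :
    |pot a b u - pot a b v| ≤ 1 := by
  obtain ⟨⟨j1, k1⟩, hu⟩ := u
  obtain ⟨⟨j2, k2⟩, hv⟩ := v
  dsimp only [pot] at h ⊢
  rcases h with ⟨h1, h2, h3⟩ | ⟨h1, h2⟩
  · subst h1; subst h2; subst h3
    split_ifs <;> rw [abs_le] <;> push_cast <;> omega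
  · subst h1; subst h2
    split_ifs <;> rw [abs_le] <;> push_cast <;> omega

lemma pot_adj (a b : ℕ) {u v : DyadV} (h : dyad.Adj u v) :
    |pot a b u - pot a b v| ≤ 1 := by
  rw [dyad, SimpleGraph.fromRel_adj] at h
  rcases h.2 with h | h
  · exact pot_rel a b u v h
  · rw [abs_sub_comm]; exact pot_rel a b v u h

lemma pot_walk (a b : ℕ) {u v : DyadV} (p : dyad.Walk u v) :
    |pot a b u - pot a b v| ≤ (p.length : ℤ) := by
  induction p with
  | nil => simp
  | cons h p ih =>
    calc |pot a b _ - pot a b _| ≤ |pot a b _ - pot a b _| + |pot a b _ - pot a b _| :=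
          abs_sub_le _ _ _
      _ ≤ 1 + (p.length : ℤ) := add_le_add (pot_adj a b h) ih
      _ ≤ _ := by push_cast [SimpleGraph.Walk.length_cons]; omega

lemma pot_dist (a b : ℕ) (u v : DyadV) :
    |pot a b u - pot a b v| ≤ (dyad.dist u v : ℤ) := by
  have hr : dyad.Reachable u v := (reach_spine0 u).trans (reach_spine0 v).symm
  obtain ⟨p, hp⟩ := hr.exists_walk_length_eq_dist
  rw [← hp]
  exact pot_walk a b p

lemma pow_ne (a b : ℕ) (h : a ≠ b) : (2 : ℕ) ^ a ≠ 2 ^ b :=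
  fun he => h (Nat.pow_right_injective le_rfl he)

lemma pot_colV_pos (a b n k : ℕ) (hn : n = a) (h : k ≤ 2 ^ n) :
    pot a b (colV n k h) = (2 ^ n : ℤ) + k := by
  subst hn; simp [pot, colV]

lemma pot_colV_neg (a b n k : ℕ) (hna : n ≠ a) (hnb : n = b) (h : k ≤ 2 ^ n) :
    pot a b (colV n k h) = (2 ^ n : ℤ) - k := by
  subst hnb; simp [pot, colV, pow_ne n a hna]

theorem stmt16 : overIndex dyad = ⊤ := by
  have key : ∀ m : ℕ, ¬ OverlapBound dyad m := by
    intro m hm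
    obtain ⟨I, hIS, hun, hcard⟩ := hm {p | ∃ n : ℕ, p = (colV n 1 (opow n), 2 ^ n)}
    -- every ball is in I
    have hall : ∀ n : ℕ, (colV n 1 (opow n), 2 ^ n) ∈ I := by
      intro n
      have hz : (colV n (2 ^ n) le_rfl) ∈
          ⋃ p ∈ {p : DyadV × ℕ | ∃ n : ℕ, p = (colV n 1 (opow n), 2 ^ n)}, gball dyad p := by
        refine Set.mem_biUnion ⟨n, rfl⟩ ?_
        show dyad.dist (colV n 1 (opow n)) (colV n (2 ^ n) le_rfl) ≤ 2 ^ n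
        obtain ⟨t, ht⟩ : ∃ t, 2 ^ n = t + 1 := ⟨2 ^ n - 1, by have := opow n; omega⟩
        have hw := SimpleGraph.dist_le
          ((colWalk1 n t (ht ▸ le_rfl)).copy
            (show colV n (t + 1) (ht ▸ le_rfl) = colV n (2 ^ n) le_rfl by
              apply Subtype.ext; simp only [colV]; rw [ht]) rfl).reverse
        rw [SimpleGraph.Walk.length_reverse, SimpleGraph.Walk.length_copy,
          colWalk1_length] at hw
        omega
      rw [← hun] at hz
      obtain ⟨p, hpI, hzp⟩ := Set.mem_iUnion₂.mp hz
      obtain ⟨n', hn'⟩ := hIS hpI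
      subst hn'
      rcases eq_or_ne n' n with rfl | hne
      · exact hpI
      · exfalso
        have hd : dyad.dist (colV n' 1 (opow n')) (colV n (2 ^ n) le_rfl) ≤ 2 ^ n' := hzp
        have hd' : (dyad.dist (colV n' 1 (opow n')) (colV n (2 ^ n) le_rfl) : ℤ)
            ≤ (2 : ℤ) ^ n' := by exact_mod_cast hd
        have h1' : (1 : ℤ) ≤ 2 ^ n' := by exact_mod_cast opow n'
        rcases lt_or_gt_of_ne hne with hlt | hlt
        · -- n' < n : use pot n n'
          have hp := pot_dist n n' (colV n' 1 (opow n')) (colV n (2 ^ n) le_rfl)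
          rw [pot_colV_neg n n' n' 1 hne rfl (opow n'), pot_colV_pos n n' n (2 ^ n) rfl le_rfl]
            at hp
          have hpow : (2 : ℤ) ^ n' * 2 ≤ 2 ^ n := by
            have : (2 : ℤ) ^ (n' + 1) ≤ 2 ^ n := pow_le_pow_right₀ (by norm_num) (by omega)
            rw [pow_succ] at this; exact this
          rw [abs_le] at hp
          push_cast at hp hd' hpow h1'
          omega
        · -- n < n' : use pot n' n
          have hp := pot_dist n' n (colV n' 1 (opow n')) (colV n (2 ^ n) le_rfl)
          rw [pot_colV_pos n' n n' 1 rfl (opow n'),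
            pot_colV_neg n' n n (2 ^ n) (Ne.symm hne) rfl le_rfl] at hp
          rw [abs_le] at hp
          push_cast at hp hd' h1'
          omega
    -- all balls contain spineV 0
    have hmem : ∀ n : ℕ, (spineV 0) ∈ gball dyad (colV n 1 (opow n), 2 ^ n) := by
      intro n
      show dyad.dist (colV n 1 (opow n)) (spineV 0) ≤ 2 ^ n
      have hw := SimpleGraph.dist_le
        (SimpleGraph.Walk.cons (adj_col n 0 (opow n))
          (((colWalk n 0 (Nat.zero_le _)).copy rfl (colV_zero_eq n)).append (spineWalk _)))
      simp only [SimpleGraph.Walk.length_cons, SimpleGraph.Walk.length_append,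
        SimpleGraph.Walk.length_copy, spineWalk_length, colWalk_length] at hw
      norm_num at hw
      have h1 : 1 ≤ (2 : ℕ) ^ n := opow n
      omega
    have hinf : ({p ∈ I | spineV 0 ∈ gball dyad p}).encard = ⊤ := by
      rw [Set.encard_eq_top_iff]
      refine Set.infinite_of_injective_forall_mem
        (f := fun n : ℕ => ((colV n 1 (opow n), 2 ^ n) : DyadV × ℕ)) ?_ ?_
      · intro a b hab
        have : (2 : ℕ) ^ a = 2 ^ b := congrArg Prod.snd hab
        exact Nat.pow_right_injective le_rfl this
      · intro n
        exact ⟨hall n, hmem n⟩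
    have hle := hcard (spineV 0)
    rw [hinf] at hle
    exact absurd (top_le_iff.mp hle) (by simp)
  have hempty : {m | OverlapBound dyad m} = ∅ := Set.eq_empty_iff_forall_notMem.mpr key
  rw [overIndex, hempty]
  simp
end
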